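/- arXiv:1612.09451 — 2 statements merged into one kernel-verified Lean document; each statement's English description precedes it below -/
import Mathlib

section
/- Let n ≥ 2, let 0 < r < 1, let F be a complex Banach space, let U ⊆ ℂⁿ be an open neighborhood of the closed annulus Ω_{r,1}, and let s : U → F be holomorphic (DifferentiableOn ℂ). Then sup_{u ∈ Ω_{r,1}} ‖s(u)‖ = sup_{u ∈ S} ‖s(u)‖: the supremum of the norm of a holomorphic map over the closed annulus is attained on the outer unit sphere. -/
/-!
Since the dimension is at least two, every `u` with `‖u‖ ≤ 1` has an orthogonal vector `w` with
`‖w‖² = 1 - ‖u‖²`. By Pythagoras, `z ↦ u + z • w` maps the closed unit disk into the shell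
`‖u‖ ≤ ‖v‖ ≤ 1` and its boundary circle into the unit sphere, so the maximum modulus principle for
`z ↦ s (u + z • w)` bounds `‖s u‖` by the maximum of `‖s‖` on the sphere.
-/

open Set Metric Module

section InnerProductSpace

variable {𝕜 E : Type*} [RCLike 𝕜] [NormedAddCommGroup E] [InnerProductSpace 𝕜 E]

theorem exists_inner_eq_zero_norm_eq (hE : 1 < finrank 𝕜 E) (u : E) {t : ℝ} (ht : 0 ≤ t) :
    ∃ w : E, inner 𝕜 u w = 0 ∧ ‖w‖ = t := by
  have : FiniteDimensional 𝕜 E := .of_finrank_pos (by omega)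
  have hspan : finrank 𝕜 (𝕜 ∙ u) ≤ 1 := by
    simpa using finrank_span_le_card (R := 𝕜) ({u} : Set E)
  have hcompl : (𝕜 ∙ u)ᗮ ≠ ⊥ := by
    intro hbot
    have := (𝕜 ∙ u).finrank_add_finrank_orthogonal
    rw [hbot, finrank_bot] at this
    omega
  obtain ⟨v, hv, hv0⟩ := Submodule.exists_mem_ne_zero_of_ne_bot hcompl
  refine ⟨((t / ‖v‖ : ℝ) : 𝕜) • v, ?_, ?_⟩
  · rw [inner_smul_right,
      Submodule.inner_right_of_mem_orthogonal (Submodule.mem_span_singleton_self u) hv, mul_zero]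
  · rw [norm_smul, RCLike.norm_ofReal, abs_of_nonneg (by positivity),
      div_mul_cancel₀ _ (norm_ne_zero_iff.2 hv0)]

theorem norm_add_smul_sq_of_inner_eq_zero {u w : E} (h : inner 𝕜 u w = 0) (z : 𝕜) :
    ‖u + z • w‖ ^ 2 = ‖u‖ ^ 2 + ‖z‖ ^ 2 * ‖w‖ ^ 2 := by
  have := norm_add_sq_eq_norm_sq_add_norm_sq_of_inner_eq_zero u (z • w)
    (by rw [inner_smul_right, h, mul_zero])
  rw [sq, sq, sq, this, norm_smul]
  ring

end InnerProductSpace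

section Complex

variable {E F : Type*} [NormedAddCommGroup E] [InnerProductSpace ℂ E]
  [NormedAddCommGroup F] [NormedSpace ℂ F]

theorem exists_norm_add_smul_sq_eq_of_norm_le_one (hE : 1 < finrank ℂ E) {u : E} (hu : ‖u‖ ≤ 1) :
    ∃ w : E, ∀ z : ℂ, ‖u + z • w‖ ^ 2 = ‖u‖ ^ 2 + ‖z‖ ^ 2 * (1 - ‖u‖ ^ 2) := by
  obtain ⟨w, hw, hwn⟩ := exists_inner_eq_zero_norm_eq hE u (Real.sqrt_nonneg (1 - ‖u‖ ^ 2))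
  refine ⟨w, fun z => ?_⟩
  rw [norm_add_smul_sq_of_inner_eq_zero hw, hwn, Real.sq_sqrt]
  nlinarith [norm_nonneg u]

theorem norm_le_of_forall_norm_eq_one_le (hE : 1 < finrank ℂ E) {s : E → F} {u : E}
    (hu : ‖u‖ ≤ 1) (hs : DifferentiableOn ℂ s {v | ‖u‖ ≤ ‖v‖ ∧ ‖v‖ ≤ 1}) {C : ℝ}
    (hC : ∀ v : E, ‖v‖ = 1 → ‖s v‖ ≤ C) : ‖s u‖ ≤ C := by
  obtain ⟨w, hw⟩ := exists_norm_add_smul_sq_eq_of_norm_le_one hE hu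
  have hu2 : ‖u‖ ^ 2 ≤ 1 := by nlinarith [norm_nonneg u]
  have hdisk : MapsTo (fun z : ℂ => u + z • w) (closedBall 0 1) {v | ‖u‖ ≤ ‖v‖ ∧ ‖v‖ ≤ 1} := by
    intro z hz
    rw [mem_closedBall_zero_iff] at hz
    have hz2 : ‖z‖ ^ 2 ≤ 1 := by nlinarith [norm_nonneg z]
    have h := hw z
    constructor
    · nlinarith [norm_nonneg (u + z • w), norm_nonneg u,
        mul_nonneg (sq_nonneg ‖z‖) (sub_nonneg.2 hu2)]
    · nlinarith [norm_nonneg (u + z • w), mul_le_mul_of_nonneg_right hz2 (sub_nonneg.2 hu2)]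
  have hd : DiffContOnCl ℂ (fun z : ℂ => s (u + z • w)) (ball 0 1) := by
    refine DifferentiableOn.diffContOnCl ?_
    rw [closure_ball 0 one_ne_zero]
    exact hs.comp ((differentiable_id.smul_const w).const_add u).differentiableOn hdisk
  have hfrontier : ∀ z ∈ frontier (ball (0 : ℂ) 1), ‖s (u + z • w)‖ ≤ C := by
    intro z hz
    rw [frontier_ball 0 one_ne_zero, mem_sphere_zero_iff_norm] at hz
    refine hC _ ?_
    have h := hw z
    rw [hz] at h
    nlinarith [norm_nonneg (u + z • w)]
  simpa using Complex.norm_le_of_forall_mem_frontier_norm_le isBounded_ball hd hfrontier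
    (subset_closure (mem_ball_self one_pos))

end Complex

theorem stmt_7_general (n : ℕ) (hn : 2 ≤ n) (r : ℝ) (hr1 : r < 1)
    {F : Type*} [NormedAddCommGroup F] [NormedSpace ℂ F]
    (U : Set (EuclideanSpace ℂ (Fin n)))
    (hΩU : {u : EuclideanSpace ℂ (Fin n) | r ≤ ‖u‖ ∧ ‖u‖ ≤ 1} ⊆ U)
    (s : EuclideanSpace ℂ (Fin n) → F) (hs : DifferentiableOn ℂ s U) :
    sSup ((fun u => ‖s u‖) '' {u : EuclideanSpace ℂ (Fin n) | r ≤ ‖u‖ ∧ ‖u‖ ≤ 1}) =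
      sSup ((fun u => ‖s u‖) '' {u : EuclideanSpace ℂ (Fin n) | ‖u‖ = 1}) := by
  have hE : 1 < finrank ℂ (EuclideanSpace ℂ (Fin n)) := by
    rw [finrank_euclideanSpace_fin]; omega
  have : Nontrivial (EuclideanSpace ℂ (Fin n)) :=
    Module.nontrivial_of_finrank_pos (R := ℂ) (by omega)
  have hsphere : {u : EuclideanSpace ℂ (Fin n) | ‖u‖ = 1} = sphere 0 1 := by ext; simp
  have hsphereΩ : {u : EuclideanSpace ℂ (Fin n) | ‖u‖ = 1} ⊆ {u | r ≤ ‖u‖ ∧ ‖u‖ ≤ 1} :=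
    fun u hu => ⟨hu ▸ hr1.le, hu.le⟩
  obtain ⟨v₀, hv₀, hmax⟩ := (hsphere ▸ isCompact_sphere 0 1).exists_isMaxOn
    (hsphere ▸ NormedSpace.sphere_nonempty.2 zero_le_one)
    (hs.continuousOn.mono (hsphereΩ.trans hΩU)).norm
  apply csSup_eq_csSup_of_forall_exists_le
  · rintro _ ⟨u, ⟨hru, hu1⟩, rfl⟩
    have hshell : DifferentiableOn ℂ s {v | ‖u‖ ≤ ‖v‖ ∧ ‖v‖ ≤ 1} :=
      hs.mono fun v hv => hΩU ⟨hru.trans hv.1, hv.2⟩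
    exact ⟨_, mem_image_of_mem _ hv₀, norm_le_of_forall_norm_eq_one_le hE hu1 hshell hmax⟩
  · rintro _ ⟨u, hu, rfl⟩
    exact ⟨_, mem_image_of_mem _ (hsphereΩ hu), le_rfl⟩

theorem stmt_7 (n : ℕ) (hn : 2 ≤ n) (r : ℝ) (hr0 : 0 < r) (hr1 : r < 1)
    {F : Type*} [NormedAddCommGroup F] [NormedSpace ℂ F] [CompleteSpace F]
    (U : Set (EuclideanSpace ℂ (Fin n))) (hU : IsOpen U)
    (hΩU : {u : EuclideanSpace ℂ (Fin n) | r ≤ ‖u‖ ∧ ‖u‖ ≤ 1} ⊆ U)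
    (s : EuclideanSpace ℂ (Fin n) → F) (hs : DifferentiableOn ℂ s U) :
    sSup ((fun u => ‖s u‖) '' {u : EuclideanSpace ℂ (Fin n) | r ≤ ‖u‖ ∧ ‖u‖ ≤ 1}) =
      sSup ((fun u => ‖s u‖) '' {u : EuclideanSpace ℂ (Fin n) | ‖u‖ = 1}) :=
  stmt_7_general n hn r hr1 U hΩU s hs
end

section
/- Let n ≥ 2, k ≥ 1, 0 < r < 1, and let H be a continuous map from the closed annulus Ω_{r,1} ⊆ ℂⁿ to the positive-definite Hermitian k×k complex matrices. Then there exists a constant C ≥ 1, depending only on n, k, r and H, such that for every open neighborhood U ⊆ ℂⁿ of Ω_{r,1} and every holomorphic map s : U → ℂᵏ one has sup_{u ∈ Ω_{r,1}} √(s(u)ᴴ·H(u)·s(u)) ≤ C·sup_{u ∈ S} √(s(u)ᴴ·H(u)·s(u)). -/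
/-!
Through a point `u` of the annulus pass a complex line `z ↦ u + z • e` with `e` a unit vector
orthogonal to `u` (it exists since `n ≥ 2`). As `‖u + z • e‖² = ‖u‖² + ‖z‖²`, the disc
`‖z‖ ≤ √(1 - ‖u‖²)` is mapped into the annulus and its boundary circle onto the unit sphere, so
the one-variable maximum modulus principle bounds `‖s u‖` by the supremum of `‖s‖` on the sphere.
On the compact annulus the continuous positive-definite `H` makes the `H`-norm uniformly
equivalent to the Euclidean one, `c₁ ‖v‖ ≤ ‖v‖_H ≤ c₂ ‖v‖`, and `C = max 1 (c₂ / c₁)` works.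
-/

open scoped ComplexOrder

/-- The `H`-norm `√(s(u)ᴴ·H(u)·s(u))` of a vector of `ℂᵏ` with respect to a Hermitian matrix. -/
noncomputable def hermNorm {k : ℕ} (H : Matrix (Fin k) (Fin k) ℂ)
    (v : EuclideanSpace ℂ (Fin k)) : ℝ :=
  Real.sqrt ((dotProduct (star fun i => v i) (H.mulVec fun i => v i)).re)

open Metric Module Set
open scoped InnerProductSpace

lemma isCompact_annulus {E : Type*} [NormedAddCommGroup E] [ProperSpace E] (r ρ : ℝ) :
    IsCompact {u : E | r ≤ ‖u‖ ∧ ‖u‖ ≤ ρ} :=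
  (isCompact_closedBall 0 ρ).of_isClosed_subset
    ((isClosed_le continuous_const continuous_norm).inter
      (isClosed_le continuous_norm continuous_const))
    fun _ hu => mem_closedBall_zero_iff.2 hu.2

section MaximumPrinciple

variable {E F : Type*} [NormedAddCommGroup E] [InnerProductSpace ℂ E]
  [NormedAddCommGroup F] [NormedSpace ℂ F]

lemma exists_norm_eq_one_inner_eq_zero (hE : 2 ≤ finrank ℂ E) (u : E) :
    ∃ e : E, ‖e‖ = 1 ∧ ⟪u, e⟫_ℂ = 0 := by
  have hspan : (ℂ ∙ u) ≠ ⊤ := by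
    intro htop
    have := finrank_span_le_card (R := ℂ) ({u} : Set E)
    rw [htop, finrank_top] at this
    simp at this
    omega
  obtain ⟨v, hv, hv0⟩ :=
    Submodule.exists_mem_ne_zero_of_ne_bot (mt Submodule.orthogonal_eq_bot_iff.mp hspan)
  refine ⟨(‖v‖⁻¹ : ℂ) • v, norm_smul_inv_norm hv0, ?_⟩
  rw [inner_smul_right, Submodule.mem_orthogonal_singleton_iff_inner_right.1 hv, mul_zero]

lemma norm_add_smul_sq_of_inner_eq_zero_s8 {u e : E} (he : ‖e‖ = 1) (hue : ⟪u, e⟫_ℂ = 0) (z : ℂ) :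
    ‖u + z • e‖ ^ 2 = ‖u‖ ^ 2 + ‖z‖ ^ 2 := by
  rw [sq, norm_add_sq_eq_norm_sq_add_norm_sq_of_inner_eq_zero (𝕜 := ℂ) _ _
      (by rw [inner_smul_right, hue, mul_zero]),
    norm_smul, he, mul_one, sq, sq]

lemma norm_le_of_forall_norm_eq_norm_le (hE : 2 ≤ finrank ℂ E) {r ρ M : ℝ} {f : E → F}
    (hf : DifferentiableOn ℂ f {w | r ≤ ‖w‖ ∧ ‖w‖ ≤ ρ}) (hM : ∀ w : E, ‖w‖ = ρ → ‖f w‖ ≤ M)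
    {u : E} (hru : r ≤ ‖u‖) (huρ : ‖u‖ ≤ ρ) : ‖f u‖ ≤ M := by
  rcases huρ.eq_or_lt with hu | hu
  · exact hM u hu
  obtain ⟨e, he, hue⟩ := exists_norm_eq_one_inner_eq_zero hE u
  set R := √(ρ ^ 2 - ‖u‖ ^ 2)
  have hR : 0 < R := Real.sqrt_pos.2 (by nlinarith [norm_nonneg u])
  have hR2 : R ^ 2 = ρ ^ 2 - ‖u‖ ^ 2 := Real.sq_sqrt (by nlinarith [norm_nonneg u])
  set g : ℂ → E := fun z => u + z • e
  have hg := norm_add_smul_sq_of_inner_eq_zero_s8 he hue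
  have hmaps : MapsTo g (closedBall 0 R) {w | r ≤ ‖w‖ ∧ ‖w‖ ≤ ρ} := by
    intro z hz
    have hzR : ‖z‖ ^ 2 ≤ R ^ 2 := by gcongr; exact mem_closedBall_zero_iff.1 hz
    have := hg z
    constructor <;> nlinarith [norm_nonneg (g z), norm_nonneg u, norm_nonneg z]
  have hd : DiffContOnCl ℂ (f ∘ g) (ball 0 R) := by
    apply DifferentiableOn.diffContOnCl
    rw [closure_ball 0 hR.ne']
    exact hf.comp (by fun_prop : Differentiable ℂ g).differentiableOn hmaps
  have hfront : ∀ z ∈ frontier (ball (0 : ℂ) R), ‖(f ∘ g) z‖ ≤ M := by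
    intro z hz
    rw [frontier_ball 0 hR.ne', mem_sphere_zero_iff_norm] at hz
    have := hg z
    refine hM _ ?_
    nlinarith [norm_nonneg (g z), norm_nonneg u]
  simpa [g] using Complex.norm_le_of_forall_mem_frontier_norm_le isBounded_ball hd hfront
    (subset_closure (mem_ball_self hR))

end MaximumPrinciple

section HermNorm

variable {k : ℕ}

lemma hermNorm_smul (H : Matrix (Fin k) (Fin k) ℂ) (c : ℂ) (v : EuclideanSpace ℂ (Fin k)) :
    hermNorm H (c • v) = ‖c‖ * hermNorm H v := by
  have hc : star c * c = ((‖c‖ ^ 2 : ℝ) : ℂ) := by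
    rw [RCLike.star_def, Complex.conj_mul']
    norm_cast
  unfold hermNorm
  rw [show (fun i => (c • v) i) = c • (fun i => v i) from rfl, star_smul, Matrix.mulVec_smul,
    smul_dotProduct, dotProduct_smul, smul_eq_mul, smul_eq_mul, ← mul_assoc, hc,
    Complex.re_ofReal_mul, Real.sqrt_mul (sq_nonneg _), Real.sqrt_sq (norm_nonneg c)]

lemma hermNorm_zero (H : Matrix (Fin k) (Fin k) ℂ) : hermNorm H 0 = 0 := by
  simpa using hermNorm_smul H 0 0

lemma hermNorm_pos {H : Matrix (Fin k) (Fin k) ℂ} (hH : H.PosDef) {v : EuclideanSpace ℂ (Fin k)}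
    (hv : v ≠ 0) : 0 < hermNorm H v :=
  Real.sqrt_pos.2 (hH.re_dotProduct_pos fun h => hv (by ext i; exact congrFun h i))

lemma continuous_hermNorm :
    Continuous fun p : Matrix (Fin k) (Fin k) ℂ × EuclideanSpace ℂ (Fin k) => hermNorm p.1 p.2 := by
  have hv : Continuous fun p : Matrix (Fin k) (Fin k) ℂ × EuclideanSpace ℂ (Fin k) =>
      fun i => p.2 i :=
    (PiLp.continuous_ofLp 2 _).comp continuous_snd
  exact Real.continuous_sqrt.comp <| Complex.continuous_re.comp <|
    (continuous_star.comp hv).dotProduct (continuous_fst.matrix_mulVec hv)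

lemma exists_hermNorm_bounds {X : Type*} [TopologicalSpace X] {K : Set X} (hK : IsCompact K)
    {H : X → Matrix (Fin k) (Fin k) ℂ} (hH : ContinuousOn H K) (hpos : ∀ x ∈ K, (H x).PosDef) :
    ∃ c₁ c₂ : ℝ, 0 < c₁ ∧ 0 < c₂ ∧ ∀ x ∈ K, ∀ v : EuclideanSpace ℂ (Fin k),
      c₁ * ‖v‖ ≤ hermNorm (H x) v ∧ hermNorm (H x) v ≤ c₂ * ‖v‖ := by
  set A := K ×ˢ sphere (0 : EuclideanSpace ℂ (Fin k)) 1
  have hA : IsCompact A := hK.prod (isCompact_sphere 0 1)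
  have hcont : ContinuousOn (fun p : X × EuclideanSpace ℂ (Fin k) => hermNorm (H p.1) p.2) A := by
    have hpair : ContinuousOn (fun p : X × EuclideanSpace ℂ (Fin k) => (H p.1, p.2)) A :=
      (hH.comp continuousOn_fst fun _ hp => hp.1).prodMk continuousOn_snd
    exact (continuous_hermNorm.comp_continuousOn hpair :)
  obtain ⟨c₁, hc₁, hlow⟩ := hA.exists_forall_le' hcont (a := 0) fun p hp =>
    hermNorm_pos (hpos _ hp.1) (ne_zero_of_mem_unit_sphere ⟨p.2, hp.2⟩)
  obtain ⟨c₂, hup⟩ := hA.bddAbove_image hcont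
  refine ⟨c₁, max c₂ 1, hc₁, by positivity, fun x hx v => ?_⟩
  rcases eq_or_ne v 0 with rfl | hv
  · simp [hermNorm_zero]
  have hw : (x, (‖v‖⁻¹ : ℂ) • v) ∈ A := ⟨hx, mem_sphere_zero_iff_norm.2 (norm_smul_inv_norm hv)⟩
  have hscale : hermNorm (H x) v = ‖v‖ * hermNorm (H x) ((‖v‖⁻¹ : ℂ) • v) := by
    rw [hermNorm_smul, norm_inv, Complex.norm_real, norm_norm,
      mul_inv_cancel_left₀ (norm_ne_zero_iff.2 hv)]
  have hlow_w : c₁ ≤ hermNorm (H x) ((‖v‖⁻¹ : ℂ) • v) := hlow (x, _) hw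
  have hup_w : hermNorm (H x) ((‖v‖⁻¹ : ℂ) • v) ≤ max c₂ 1 :=
    (hup (mem_image_of_mem _ hw)).trans (le_max_left _ _)
  rw [hscale, mul_comm c₁, mul_comm _ ‖v‖]
  exact ⟨by gcongr, by gcongr⟩

end HermNorm

theorem stmt_8_general (n k : ℕ) (hn : 2 ≤ n) (r : ℝ) (hr1 : r < 1)
    (H : EuclideanSpace ℂ (Fin n) → Matrix (Fin k) (Fin k) ℂ)
    (hHcont : ContinuousOn H {u : EuclideanSpace ℂ (Fin n) | r ≤ ‖u‖ ∧ ‖u‖ ≤ 1})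
    (hHpos : ∀ u : EuclideanSpace ℂ (Fin n), r ≤ ‖u‖ → ‖u‖ ≤ 1 → (H u).PosDef) :
    ∃ C : ℝ, 1 ≤ C ∧
      ∀ (U : Set (EuclideanSpace ℂ (Fin n))), IsOpen U →
        {u : EuclideanSpace ℂ (Fin n) | r ≤ ‖u‖ ∧ ‖u‖ ≤ 1} ⊆ U →
        ∀ s : EuclideanSpace ℂ (Fin n) → EuclideanSpace ℂ (Fin k),
          DifferentiableOn ℂ s U →
          sSup ((fun u => hermNorm (H u) (s u)) ''
              {u : EuclideanSpace ℂ (Fin n) | r ≤ ‖u‖ ∧ ‖u‖ ≤ 1}) ≤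
            C * sSup ((fun u => hermNorm (H u) (s u)) ''
              {u : EuclideanSpace ℂ (Fin n) | ‖u‖ = 1}) := by
  obtain ⟨c₁, c₂, hc₁, hc₂, hcomp⟩ :=
    exists_hermNorm_bounds (isCompact_annulus r 1) hHcont fun u hu => hHpos u hu.1 hu.2
  refine ⟨max 1 (c₂ / c₁), le_max_left _ _, fun U _ hKU s hs => ?_⟩
  set M := sSup ((fun u => hermNorm (H u) (s u)) '' {u | ‖u‖ = 1})
  have hsphere_sub : ∀ w : EuclideanSpace ℂ (Fin n), ‖w‖ = 1 → r ≤ ‖w‖ ∧ ‖w‖ ≤ 1 :=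
    fun w hw => ⟨hw ▸ hr1.le, hw.le⟩
  have hbdd : BddAbove ((fun u => hermNorm (H u) (s u)) '' {u | ‖u‖ = 1}) := by
    obtain ⟨B, hB⟩ :=
      (isCompact_annulus r 1).exists_bound_of_continuousOn (hs.continuousOn.mono hKU)
    refine ⟨c₂ * B, ?_⟩
    rintro _ ⟨w, hw, rfl⟩
    exact (hcomp w (hsphere_sub w hw) _).2.trans (by gcongr; exact hB w (hsphere_sub w hw))
  have hM : 0 ≤ M := Real.sSup_nonneg (by rintro _ ⟨w, -, rfl⟩; exact Real.sqrt_nonneg _)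
  have hsphere : ∀ w : EuclideanSpace ℂ (Fin n), ‖w‖ = 1 → ‖s w‖ ≤ M / c₁ := fun w hw => by
    rw [le_div_iff₀' hc₁]
    exact (hcomp w (hsphere_sub w hw) _).1.trans (le_csSup hbdd ⟨w, hw, rfl⟩)
  refine Real.sSup_le ?_ (by positivity)
  rintro _ ⟨u, hu, rfl⟩
  have hsu : ‖s u‖ ≤ M / c₁ :=
    norm_le_of_forall_norm_eq_norm_le (by simpa using hn) (hs.mono hKU) hsphere hu.1 hu.2
  calc hermNorm (H u) (s u) ≤ c₂ * ‖s u‖ := (hcomp u hu _).2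
    _ ≤ c₂ * (M / c₁) := by gcongr
    _ = c₂ / c₁ * M := by ring
    _ ≤ max 1 (c₂ / c₁) * M := by gcongr; exact le_max_right _ _

theorem stmt_8 (n k : ℕ) (hn : 2 ≤ n) (hk : 1 ≤ k) (r : ℝ) (hr0 : 0 < r) (hr1 : r < 1)
    (H : EuclideanSpace ℂ (Fin n) → Matrix (Fin k) (Fin k) ℂ)
    (hHcont : ContinuousOn H {u : EuclideanSpace ℂ (Fin n) | r ≤ ‖u‖ ∧ ‖u‖ ≤ 1})
    (hHpos : ∀ u : EuclideanSpace ℂ (Fin n), r ≤ ‖u‖ → ‖u‖ ≤ 1 → (H u).PosDef) :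
    ∃ C : ℝ, 1 ≤ C ∧
      ∀ (U : Set (EuclideanSpace ℂ (Fin n))), IsOpen U →
        {u : EuclideanSpace ℂ (Fin n) | r ≤ ‖u‖ ∧ ‖u‖ ≤ 1} ⊆ U →
        ∀ s : EuclideanSpace ℂ (Fin n) → EuclideanSpace ℂ (Fin k),
          DifferentiableOn ℂ s U →
          sSup ((fun u => hermNorm (H u) (s u)) ''
              {u : EuclideanSpace ℂ (Fin n) | r ≤ ‖u‖ ∧ ‖u‖ ≤ 1}) ≤
            C * sSup ((fun u => hermNorm (H u) (s u)) ''
              {u : EuclideanSpace ℂ (Fin n) | ‖u‖ = 1}) :=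
  stmt_8_general n k hn r hr1 H hHcont hHpos
end
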